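/- Let H : ℝⁿ × ℝ × ℝⁿ → ℝ be C¹ and such that for every (x,u) the function p ↦ H(x,u,p) is strictly convex and even (H(x,u,p) = H(x,u,−p)). Let (x,u,p) : I → ℝⁿ × ℝ × ℝⁿ be a differentiable curve on an interval I solving the contact Hamiltonian system ẋ = ∂H/∂p(x,u,p), ṗ = −∂H/∂x(x,u,p) − (∂H/∂u)(x,u,p)·p, u̇ = ⟨∂H/∂p(x,u,p), p⟩ − H(x,u,p). If t₀ ∈ I satisfies H(x(t₀),u(t₀),p(t₀)) = 0, then u̇(t₀) ≥ 0, with u̇(t₀) = 0 if and only if p(t₀) = 0. In particular, if H vanishes along the whole trajectory, then t ↦ u(t) is nondecreasing. -/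

import Mathlib

open RealInnerProductSpace Set

/-!
Fix `(x, u)` and write `f = H (x, u, ·)`. Along the flow `u̇ = ⟪∇f p, p⟫ - f p`, which equals
`⟪∇f p, p⟫` on the zero level set. For a strictly convex `f` the tangent inequality at `p`,
evaluated at `0`, gives `f p - f 0 < ⟪∇f p, p⟫`, and for an even one `f 0 < f p` because `0` is
the midpoint of `p` and `-p`. Hence `⟪∇f p, p⟫ > 0` whenever `p ≠ 0`, and `u` has nonnegative
derivative wherever `H` vanishes.
-/

namespace StrictConvexOn

section VectorSpace

variable {E : Type*} [AddCommGroup E] [Module ℝ E] {f : E → ℝ}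

lemma comp_add_smul (hf : StrictConvexOn ℝ univ f) (x : E) {v : E} (hv : v ≠ 0) :
    StrictConvexOn ℝ univ fun t : ℝ => f (x + t • v) := by
  refine ⟨convex_univ, fun a _ b _ hab α β hα hβ hαβ => ?_⟩
  have hcomb : x + (α • a + β • b) • v = α • (x + a • v) + β • (x + b • v) := by
    linear_combination (norm := module) -(hαβ • x)
  dsimp only
  rw [hcomb]
  exact hf.2 trivial trivial (fun h => hab (smul_left_injective ℝ hv (add_left_cancel h))) hα hβ hαβ

lemma apply_zero_lt_of_even (hf : StrictConvexOn ℝ univ f)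
    (heven : ∀ q, f q = f (-q)) {p : E} (hp : p ≠ 0) : f 0 < f p := by
  have hmid : (1 / 2 : ℝ) • p + (1 / 2 : ℝ) • -p = 0 := by
    rw [smul_neg, add_neg_cancel]
  have hne : p ≠ -p := by
    simpa using (smul_left_injective ℝ hp).ne (by norm_num : (1 : ℝ) ≠ -1)
  have h := hf.2 trivial trivial hne (by norm_num : (0 : ℝ) < 1 / 2)
    (by norm_num : (0 : ℝ) < 1 / 2) (by norm_num)
  rw [hmid, ← heven p, smul_eq_mul] at h
  linarith

end VectorSpace

section NormedSpace

variable {E : Type*} [NormedAddCommGroup E] [NormedSpace ℝ E] {f : E → ℝ}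

lemma add_fderiv_sub_lt (hf : StrictConvexOn ℝ univ f) {f' : E →L[ℝ] ℝ} {x y : E}
    (hxy : x ≠ y) (hf' : HasFDerivAt f f' x) : f x + f' (y - x) < f y := by
  have hline : HasDerivAt (fun t : ℝ => f (x + t • (y - x))) (f' (y - x)) 0 := by
    have hpath : HasDerivAt (fun t : ℝ => x + t • (y - x)) (y - x) 0 := by
      simpa using ((hasDerivAt_id (0 : ℝ)).smul_const (y - x)).const_add x
    exact (by simpa using hf' : HasFDerivAt f f' (x + (0 : ℝ) • (y - x))).comp_hasDerivAt 0 hpath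
  have hslope := (hf.comp_add_smul x (sub_ne_zero.2 hxy.symm)).lt_slope_of_hasDerivAt
    trivial trivial zero_lt_one hline
  simp only [slope_def_field, one_smul, zero_smul, add_zero, add_sub_cancel, sub_zero,
    div_one] at hslope
  linarith

lemma fderiv_self_pos_of_even (hf : StrictConvexOn ℝ univ f)
    (heven : ∀ q, f q = f (-q)) {f' : E →L[ℝ] ℝ} {p : E} (hf' : HasFDerivAt f f' p) (hp : p ≠ 0) :
    0 < f' p := by
  have htangent := hf.add_fderiv_sub_lt hp hf'
  rw [zero_sub, map_neg] at htangent
  linarith [hf.apply_zero_lt_of_even heven hp]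

lemma inner_gradient_self_pos_of_even {F : Type*} [NormedAddCommGroup F]
    [InnerProductSpace ℝ F] [CompleteSpace F] {f : F → ℝ} (hf : StrictConvexOn ℝ univ f)
    (heven : ∀ q, f q = f (-q)) {p : F} (hd : DifferentiableAt ℝ f p) (hp : p ≠ 0) :
    0 < ⟪gradient f p, p⟫ := by
  rw [inner_gradient_left]
  exact hf.fderiv_self_pos_of_even heven hd.hasFDerivAt hp

end NormedSpace

end StrictConvexOn

theorem contact_hamiltonian_u_monotone_general
    {n : ℕ}
    (H : EuclideanSpace ℝ (Fin n) × ℝ × EuclideanSpace ℝ (Fin n) → ℝ)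
    (hH : ContDiff ℝ 1 H)
    (hconv : ∀ (y : EuclideanSpace ℝ (Fin n)) (w : ℝ),
      StrictConvexOn ℝ Set.univ (fun q => H (y, w, q)))
    (heven : ∀ (y : EuclideanSpace ℝ (Fin n)) (w : ℝ) (q : EuclideanSpace ℝ (Fin n)),
      H (y, w, q) = H (y, w, -q))
    (I : Set ℝ) (hI : Convex ℝ I)
    (x : ℝ → EuclideanSpace ℝ (Fin n)) (u : ℝ → ℝ)
    (p : ℝ → EuclideanSpace ℝ (Fin n))
    (hu : ∀ t ∈ I, HasDerivWithinAt u
      (⟪gradient (fun q => H (x t, u t, q)) (p t), p t⟫ - H (x t, u t, p t)) I t) :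
    (∀ t₀ ∈ I, H (x t₀, u t₀, p t₀) = 0 →
      0 ≤ ⟪gradient (fun q => H (x t₀, u t₀, q)) (p t₀), p t₀⟫
          - H (x t₀, u t₀, p t₀) ∧
        (⟪gradient (fun q => H (x t₀, u t₀, q)) (p t₀), p t₀⟫
            - H (x t₀, u t₀, p t₀) = 0 ↔ p t₀ = 0)) ∧
      ((∀ t ∈ I, H (x t, u t, p t) = 0) → MonotoneOn u I) := by
  have hHd : Differentiable ℝ H := hH.differentiable one_ne_zero
  have hpointwise : ∀ t₀ ∈ I, H (x t₀, u t₀, p t₀) = 0 →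
      0 ≤ ⟪gradient (fun q => H (x t₀, u t₀, q)) (p t₀), p t₀⟫ - H (x t₀, u t₀, p t₀) ∧
        (⟪gradient (fun q => H (x t₀, u t₀, q)) (p t₀), p t₀⟫ - H (x t₀, u t₀, p t₀) = 0 ↔
          p t₀ = 0) := by
    intro t₀ _ hzero
    rw [hzero, sub_zero]
    rcases eq_or_ne (p t₀) 0 with hp | hp
    · simp [hp]
    · have hpos := (hconv (x t₀) (u t₀)).inner_gradient_self_pos_of_even
        (heven (x t₀) (u t₀)) (by fun_prop) hp
      exact ⟨hpos.le, iff_of_false hpos.ne' hp⟩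
  refine ⟨hpointwise, fun hzero => monotoneOn_of_hasDerivWithinAt_nonneg hI
    (fun t ht => (hu t ht).continuousWithinAt)
    (fun t ht => (hu t (interior_subset ht)).mono interior_subset)
    (fun t ht => (hpointwise t (interior_subset ht) (hzero t (interior_subset ht))).1)⟩

/-- For a `C¹` contact Hamiltonian that is strictly convex and even in `p`, along any
solution of the contact Hamiltonian system the `u`-component has nonnegative derivative
at any time where `H` vanishes, with zero derivative exactly when `p` vanishes; in
particular, if `H` vanishes along the whole trajectory then `u` is nondecreasing. -/
theorem contact_hamiltonian_u_monotone
    {n : ℕ}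
    (H : EuclideanSpace ℝ (Fin n) × ℝ × EuclideanSpace ℝ (Fin n) → ℝ)
    (hH : ContDiff ℝ 1 H)
    (hconv : ∀ (y : EuclideanSpace ℝ (Fin n)) (w : ℝ),
      StrictConvexOn ℝ Set.univ (fun q => H (y, w, q)))
    (heven : ∀ (y : EuclideanSpace ℝ (Fin n)) (w : ℝ) (q : EuclideanSpace ℝ (Fin n)),
      H (y, w, q) = H (y, w, -q))
    (I : Set ℝ) (hI : Convex ℝ I)
    (x : ℝ → EuclideanSpace ℝ (Fin n)) (u : ℝ → ℝ)
    (p : ℝ → EuclideanSpace ℝ (Fin n))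
    (hx : ∀ t ∈ I, HasDerivWithinAt x
      (gradient (fun q => H (x t, u t, q)) (p t)) I t)
    (hp : ∀ t ∈ I, HasDerivWithinAt p
      (-gradient (fun y => H (y, u t, p t)) (x t)
        - deriv (fun w => H (x t, w, p t)) (u t) • p t) I t)
    (hu : ∀ t ∈ I, HasDerivWithinAt u
      (⟪gradient (fun q => H (x t, u t, q)) (p t), p t⟫ - H (x t, u t, p t)) I t) :
    (∀ t₀ ∈ I, H (x t₀, u t₀, p t₀) = 0 →
      0 ≤ ⟪gradient (fun q => H (x t₀, u t₀, q)) (p t₀), p t₀⟫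
          - H (x t₀, u t₀, p t₀) ∧
        (⟪gradient (fun q => H (x t₀, u t₀, q)) (p t₀), p t₀⟫
            - H (x t₀, u t₀, p t₀) = 0 ↔ p t₀ = 0)) ∧
      ((∀ t ∈ I, H (x t, u t, p t) = 0) → MonotoneOn u I) :=
  contact_hamiltonian_u_monotone_general H hH hconv heven I hI x u p hu
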